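/- Let A and Â be real symmetric p×p matrices with eigenvalues λ₁ ≥ … ≥ λ_p and λ̂₁ ≥ … ≥ λ̂_p and corresponding unit eigenvectors v_i, v̂_i. Fix i and suppose there exist g > δ ≥ 0 such that |λ̂_j − λ_j| ≤ δ for all j, and λ_{i-1} − λ_i ≥ g and λ_i − λ_{i+1} ≥ g (omitting the conditions that refer to indices outside 1..p). Then min(|λ̂_{i-1} − λ_i|, |λ̂_{i+1} − λ_i|) ≥ g − δ, and consequently there is a sign s ∈ {−1, +1} with ‖s·v̂_i − v_i‖ ≤ 2^{3/2}·‖A − Â‖ / (g − δ), where ‖A − Â‖ is the spectral norm. -/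

import Mathlib

open Matrix

/-- The spectral norm (largest singular value) of a real matrix, as the
operator norm of the induced map between Euclidean spaces. -/
noncomputable def specNorm {m n : ℕ} (A : Matrix (Fin m) (Fin n) ℝ) : ℝ :=
  ‖(Matrix.toEuclideanLin A).toContinuousLinearMap‖

/-- The Euclidean (ℓ2) norm of a real vector. -/
noncomputable def vecNorm {n : ℕ} (x : Fin n → ℝ) : ℝ :=
  Real.sqrt (∑ i, x i ^ 2)

/-!
Expand `vᵢ` in the orthonormal eigenbasis `(v̂ⱼ)` of `Â`. Symmetry of `Â` gives
`⟪v̂ⱼ, (Â - λᵢ) vᵢ⟫ = (λ̂ⱼ - λᵢ) ⟪v̂ⱼ, vᵢ⟫`, and `(Â - λᵢ) vᵢ = (Â - A) vᵢ` has norm at most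
`‖A - Â‖`. Monotonicity spreads the two neighbouring gaps to `|λⱼ - λᵢ| ≥ g` for every `j ≠ i`,
so `|λ̂ⱼ - λᵢ| ≥ g - δ`, and Parseval yields `(g - δ)² (1 - ⟪v̂ᵢ, vᵢ⟫²) ≤ ‖A - Â‖²`. With `s` the
sign of `⟪v̂ᵢ, vᵢ⟫`, `‖s v̂ᵢ - vᵢ‖² = 2 - 2 |⟪v̂ᵢ, vᵢ⟫| ≤ 2 (1 - ⟪v̂ᵢ, vᵢ⟫²)`, which gives the bound
with the constant `√2 ≤ 2^{3/2}`.
-/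

open scoped RealInnerProductSpace
open Finset

lemma vecNorm_eq_norm_toLp {n : ℕ} (x : Fin n → ℝ) : vecNorm x = ‖WithLp.toLp 2 x‖ := by
  simp only [vecNorm, EuclideanSpace.norm_eq, Real.norm_eq_abs, sq_abs]

lemma norm_toLp_mulVec_le_specNorm {m n : ℕ} (M : Matrix (Fin m) (Fin n) ℝ) (x : Fin n → ℝ) :
    ‖WithLp.toLp 2 (M *ᵥ x)‖ ≤ specNorm M * ‖WithLp.toLp 2 x‖ := by
  rw [specNorm]
  simpa [Matrix.toLpLin_toLp] using
    (Matrix.toEuclideanLin M).toContinuousLinearMap.le_opNorm (WithLp.toLp 2 x)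

lemma norm_toEuclideanLin_sub_smul_le_specNorm {n : ℕ} {A B : Matrix (Fin n) (Fin n) ℝ}
    {x : Fin n → ℝ} {c : ℝ} (hx : A *ᵥ x = c • x) :
    ‖Matrix.toEuclideanLin B (WithLp.toLp 2 x) - c • WithLp.toLp 2 x‖ ≤
      specNorm (A - B) * ‖WithLp.toLp 2 x‖ := by
  have h : Matrix.toEuclideanLin B (WithLp.toLp 2 x) - c • WithLp.toLp 2 x =
      -WithLp.toLp 2 ((A - B) *ᵥ x) := by
    simp [Matrix.toLpLin_toLp, Matrix.sub_mulVec, hx]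
  rw [h, norm_neg]
  exact norm_toLp_mulVec_le_specNorm (A - B) x

namespace EuclideanSpace

variable {n : Type*} [Fintype n] [DecidableEq n]

noncomputable def orthonormalBasisOfDotProduct (v : n → n → ℝ)
    (hv : ∀ j k, v j ⬝ᵥ v k = if j = k then 1 else 0) : OrthonormalBasis n ℝ (EuclideanSpace ℝ n) :=
  have hon : Orthonormal ℝ fun j => WithLp.toLp 2 (v j) := orthonormal_iff_ite.2 fun j k => by
    simpa [EuclideanSpace.inner_toLp_toLp, eq_comm] using hv k j
  OrthonormalBasis.mk hon (hon.linearIndependent.span_eq_top_of_card_eq_finrank' (by simp)).ge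

@[simp]
lemma orthonormalBasisOfDotProduct_apply (v : n → n → ℝ)
    (hv : ∀ j k, v j ⬝ᵥ v k = if j = k then 1 else 0) (j : n) :
    orthonormalBasisOfDotProduct v hv j = WithLp.toLp 2 (v j) := by
  simp [orthonormalBasisOfDotProduct]

end EuclideanSpace

section DavisKahan

variable {ι E : Type*} [Fintype ι] [NormedAddCommGroup E] [InnerProductSpace ℝ E]

lemma LinearMap.IsSymmetric.inner_sub_smul_of_eq_smul {T : E →ₗ[ℝ] E} (hT : T.IsSymmetric)
    {u : E} {μ : ℝ} (hu : T u = μ • u) (c : ℝ) (x : E) :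
    ⟪u, T x - c • x⟫ = (μ - c) * ⟪u, x⟫ := by
  rw [inner_sub_right, ← hT, hu, real_inner_smul_left, real_inner_smul_right, sub_mul]

lemma OrthonormalBasis.sq_mul_sub_sq_inner_le (b : OrthonormalBasis ι ℝ E) {T : E →ₗ[ℝ] E}
    (hT : T.IsSymmetric) {μ : ι → ℝ} (hTb : ∀ j, T (b j) = μ j • b j) {i : ι} {c d : ℝ}
    (hd : 0 ≤ d) (hgap : ∀ j ≠ i, d ≤ |μ j - c|) (x : E) :
    d ^ 2 * (‖x‖ ^ 2 - ⟪b i, x⟫ ^ 2) ≤ ‖T x - c • x‖ ^ 2 := by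
  classical
  calc d ^ 2 * (‖x‖ ^ 2 - ⟪b i, x⟫ ^ 2) = ∑ j ∈ univ.erase i, d ^ 2 * ⟪b j, x⟫ ^ 2 := by
        rw [← b.sum_sq_inner_right x, ← add_sum_erase _ _ (mem_univ i), add_sub_cancel_left,
          mul_sum]
    _ ≤ ∑ j ∈ univ.erase i, ((μ j - c) * ⟪b j, x⟫) ^ 2 := sum_le_sum fun j hj => by
        rw [mul_pow, ← sq_abs (μ j - c)]
        gcongr
        exact hgap j (ne_of_mem_erase hj)
    _ ≤ ∑ j, ((μ j - c) * ⟪b j, x⟫) ^ 2 :=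
        sum_le_sum_of_subset_of_nonneg (erase_subset _ _) fun _ _ _ => sq_nonneg _
    _ = ‖T x - c • x‖ ^ 2 := by
        simp_rw [← hT.inner_sub_smul_of_eq_smul (hTb _)]
        exact b.sum_sq_inner_right _

lemma exists_sign_norm_smul_sub_sq_le {u x : E} (hu : ‖u‖ = 1) (hx : ‖x‖ = 1) :
    ∃ s : ℝ, (s = 1 ∨ s = -1) ∧ ‖s • u - x‖ ^ 2 ≤ 2 * (1 - ⟪u, x⟫ ^ 2) := by
  have hc : |⟪u, x⟫| ≤ 1 := by simpa [hu, hx] using abs_real_inner_le_norm u x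
  obtain ⟨hc₁, hc₂⟩ := abs_le.1 hc
  rcases le_total 0 ⟪u, x⟫ with h | h
  · refine ⟨1, Or.inl rfl, ?_⟩
    rw [one_smul, norm_sub_sq_real, hu, hx]
    nlinarith
  · refine ⟨-1, Or.inr rfl, ?_⟩
    rw [neg_one_smul, norm_sub_sq_real, norm_neg, inner_neg_left, hu, hx]
    nlinarith

theorem OrthonormalBasis.exists_sign_norm_smul_sub_le (b : OrthonormalBasis ι ℝ E)
    {T : E →ₗ[ℝ] E} (hT : T.IsSymmetric) {μ : ι → ℝ} (hTb : ∀ j, T (b j) = μ j • b j) {i : ι}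
    {c d : ℝ} (hd : 0 < d) (hgap : ∀ j ≠ i, d ≤ |μ j - c|) {x : E} (hx : ‖x‖ = 1) :
    ∃ s : ℝ, (s = 1 ∨ s = -1) ∧ ‖s • b i - x‖ ≤ √2 * ‖T x - c • x‖ / d := by
  obtain ⟨s, hs, hsq⟩ := exists_sign_norm_smul_sub_sq_le (b.norm_eq_one i) hx
  have key := b.sq_mul_sub_sq_inner_le hT hTb hd.le hgap x
  rw [hx, one_pow] at key
  refine ⟨s, hs, (pow_le_pow_iff_left₀ (norm_nonneg _) (by positivity) two_ne_zero).1 ?_⟩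
  calc ‖s • b i - x‖ ^ 2 ≤ 2 * (1 - ⟪b i, x⟫ ^ 2) := hsq
    _ ≤ 2 * (‖T x - c • x‖ ^ 2 / d ^ 2) := by gcongr; rwa [le_div_iff₀' (by positivity)]
    _ = (√2 * ‖T x - c • x‖ / d) ^ 2 := by
        rw [div_pow, mul_pow, Real.sq_sqrt zero_le_two, mul_div_assoc]

end DavisKahan

lemma Antitone.le_abs_sub_of_neighbor_gaps {p : ℕ} {lam : Fin p → ℝ} (hlam : Antitone lam)
    {i : Fin p} {g : ℝ} (hpred : ∀ j : Fin p, (j : ℕ) + 1 = i → g ≤ lam j - lam i)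
    (hsucc : ∀ j : Fin p, (j : ℕ) = i + 1 → g ≤ lam i - lam j) {j : Fin p} (hj : j ≠ i) :
    g ≤ |lam j - lam i| := by
  rcases Fin.lt_or_lt_of_ne hj with hji | hij
  · have hk : g ≤ lam ⟨i - 1, by omega⟩ - lam i := hpred _ (by simp; omega)
    have hmono : lam ⟨i - 1, by omega⟩ ≤ lam j := hlam (Fin.le_iff_val_le_val.2 (by simp; omega))
    exact le_abs.2 (Or.inl (by linarith))
  · have hk : g ≤ lam i - lam ⟨i + 1, by omega⟩ := hsucc _ rfl
    have hmono : lam j ≤ lam ⟨i + 1, by omega⟩ := hlam (Fin.le_iff_val_le_val.2 (by simp; omega))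
    exact le_abs.2 (Or.inr (by linarith))

theorem davis_kahan_with_eigenvalue_gap_general {p : ℕ}
    (A Ahat : Matrix (Fin p) (Fin p) ℝ)
    (hAhat : Ahat.IsSymm)
    (lam lamhat : Fin p → ℝ)
    (v vhat : Fin p → (Fin p → ℝ))
    (hlam : Antitone lam)
    (hv : ∀ j k, v j ⬝ᵥ v k = if j = k then (1 : ℝ) else 0)
    (hvhat : ∀ j k, vhat j ⬝ᵥ vhat k = if j = k then (1 : ℝ) else 0)
    (heig : ∀ j, A.mulVec (v j) = lam j • v j)
    (heighat : ∀ j, Ahat.mulVec (vhat j) = lamhat j • vhat j)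
    (i : Fin p)
    (g δ : ℝ) (hgδ : δ < g)
    (hclose : ∀ j, |lamhat j - lam j| ≤ δ)
    (hgap_pred : ∀ j : Fin p, (j : ℕ) + 1 = (i : ℕ) → g ≤ lam j - lam i)
    (hgap_succ : ∀ j : Fin p, (j : ℕ) = (i : ℕ) + 1 → g ≤ lam i - lam j) :
    (∀ j : Fin p, ((j : ℕ) + 1 = (i : ℕ) ∨ (j : ℕ) = (i : ℕ) + 1) →
        g - δ ≤ |lamhat j - lam i|) ∧
      ∃ s : ℝ, (s = 1 ∨ s = -1) ∧
        vecNorm (s • vhat i - v i) ≤ 2 ^ ((3 : ℝ) / 2) * specNorm (A - Ahat) / (g - δ) := by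
  have hgap : ∀ j ≠ i, g - δ ≤ |lamhat j - lam i| := fun j hj => by
    linarith [hlam.le_abs_sub_of_neighbor_gaps hgap_pred hgap_succ hj,
      abs_sub_le (lam j) (lamhat j) (lam i), abs_sub_comm (lam j) (lamhat j), hclose j]
  refine ⟨fun j hj => hgap j fun h => by subst h; omega, ?_⟩
  set b := EuclideanSpace.orthonormalBasisOfDotProduct vhat hvhat
  set x := WithLp.toLp 2 (v i)
  have hT : (Matrix.toEuclideanLin Ahat).IsSymmetric :=
    Matrix.isSymmetric_toEuclideanLin_iff.2 (Matrix.isHermitian_iff_isSymm.2 hAhat)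
  have hTb : ∀ j, Matrix.toEuclideanLin Ahat (b j) = lamhat j • b j := fun j => by
    simp [b, Matrix.toLpLin_toLp, heighat]
  have hx : ‖x‖ = 1 := by
    rw [norm_eq_sqrt_real_inner, EuclideanSpace.inner_toLp_toLp, star_trivial, hv, if_pos rfl,
      Real.sqrt_one]
  have hres : ‖Matrix.toEuclideanLin Ahat x - lam i • x‖ ≤ specNorm (A - Ahat) :=
    (norm_toEuclideanLin_sub_smul_le_specNorm (heig i)).trans_eq (by rw [hx, mul_one])
  obtain ⟨s, hs, hle⟩ := b.exists_sign_norm_smul_sub_le hT hTb (sub_pos.2 hgδ) hgap hx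
  refine ⟨s, hs, ?_⟩
  calc vecNorm (s • vhat i - v i) = ‖s • b i - x‖ := by simp [vecNorm_eq_norm_toLp, b, x]
    _ ≤ √2 * specNorm (A - Ahat) / (g - δ) := hle.trans (by gcongr)
    _ ≤ 2 ^ ((3 : ℝ) / 2) * specNorm (A - Ahat) / (g - δ) := by
        gcongr
        · exact norm_nonneg _
        · rw [Real.sqrt_eq_rpow]; exact Real.rpow_le_rpow_of_exponent_le one_le_two (by norm_num)

/-- Eigenvalue-gap arithmetic combined with the Yu–Wang–Samworth variant of the
Davis–Kahan sin θ theorem.  `A`, `Ahat` are symmetric with full spectra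
`lam`, `lamhat` in non-increasing order and orthonormal eigenvector families
`v`, `vhat`.  If every eigenvalue of `Ahat` is within `δ` of the corresponding
eigenvalue of `A`, and `λ_{i-1} − λ_i ≥ g`, `λ_i − λ_{i+1} ≥ g` (conditions on
indices outside `1..p` omitted) with `g > δ ≥ 0`, then
`min(|λ̂_{i-1} − λ_i|, |λ̂_{i+1} − λ_i|) ≥ g − δ` and, up to sign,
`‖s·v̂ᵢ − vᵢ‖ ≤ 2^{3/2} ‖A − Â‖ / (g − δ)`. -/
theorem davis_kahan_with_eigenvalue_gap {p : ℕ}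
    (A Ahat : Matrix (Fin p) (Fin p) ℝ)
    (hA : A.IsSymm) (hAhat : Ahat.IsSymm)
    (lam lamhat : Fin p → ℝ)
    (v vhat : Fin p → (Fin p → ℝ))
    (hlam : Antitone lam) (hlamhat : Antitone lamhat)
    (hv : ∀ j k, v j ⬝ᵥ v k = if j = k then (1 : ℝ) else 0)
    (hvhat : ∀ j k, vhat j ⬝ᵥ vhat k = if j = k then (1 : ℝ) else 0)
    (heig : ∀ j, A.mulVec (v j) = lam j • v j)
    (heighat : ∀ j, Ahat.mulVec (vhat j) = lamhat j • vhat j)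
    (i : Fin p)
    (g δ : ℝ) (hδ : 0 ≤ δ) (hgδ : δ < g)
    (hclose : ∀ j, |lamhat j - lam j| ≤ δ)
    (hgap_pred : ∀ j : Fin p, (j : ℕ) + 1 = (i : ℕ) → g ≤ lam j - lam i)
    (hgap_succ : ∀ j : Fin p, (j : ℕ) = (i : ℕ) + 1 → g ≤ lam i - lam j) :
    (∀ j : Fin p, ((j : ℕ) + 1 = (i : ℕ) ∨ (j : ℕ) = (i : ℕ) + 1) →
        g - δ ≤ |lamhat j - lam i|) ∧
      ∃ s : ℝ, (s = 1 ∨ s = -1) ∧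
        vecNorm (s • vhat i - v i) ≤ 2 ^ ((3 : ℝ) / 2) * specNorm (A - Ahat) / (g - δ) :=
  davis_kahan_with_eigenvalue_gap_general A Ahat hAhat lam lamhat v vhat hlam hv hvhat heig heighat
    i g δ hgδ hclose hgap_pred hgap_succ
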